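/- arXiv:1605.09063 — 5 statements merged into one kernel-verified Lean document; each statement's English description precedes it below -/
import Mathlib

section
/- If a smooth curve e in R^n has a tubular neighborhood of radius δ (i.e., every point within distance δ of e has a unique closest point on e), then the intersection of e with any open ball of radius less than δ/2 is connected. -/
open Metric Set Filter Topology

/-- Continuity of the nearest-point projection onto a compact set, at points where the
nearest point is unique within the tube of radius `δ`. -/
lemma proj_continuousAt {X : Type*} [MetricSpace X] {e : Set X} (hcomp : IsCompact e)
    {δ : ℝ}
    (htube : ∀ x, infDist x e < δ → ∃! y, y ∈ e ∧ dist x y = infDist x e)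
    (P : X → X)
    (hP : ∀ x, infDist x e < δ → P x ∈ e ∧ dist x (P x) = infDist x e)
    {x : X} (hx : infDist x e < δ) :
    ContinuousAt P x := by
  rw [ContinuousAt]
  apply tendsto_of_subseq_tendsto
  intro ns hns
  -- the sequence of projections, patched to always lie in e
  set z : ℕ → X := fun k => if h : infDist (ns k) e < δ then P (ns k) else P x with hz
  have hze : ∀ k, z k ∈ e := by
    intro k
    by_cases h : infDist (ns k) e < δ
    · simp only [hz, dif_pos h]; exact (hP _ h).1
    · simp only [hz, dif_neg h]; exact (hP x hx).1
  obtain ⟨y, hy, φ, hφ, hzφ⟩ := hcomp.tendsto_subseq hze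
  refine ⟨φ, ?_⟩
  have hnsφ : Tendsto (fun k => ns (φ k)) atTop (𝓝 x) := hns.comp hφ.tendsto_atTop
  have hev : ∀ᶠ k in atTop, infDist (ns (φ k)) e < δ := by
    have : Tendsto (fun k => infDist (ns (φ k)) e) atTop (𝓝 (infDist x e)) :=
      ((continuous_infDist_pt e).tendsto x).comp hnsφ
    exact this (Iio_mem_nhds hx)
  have heq : ∀ᶠ k in atTop, P (ns (φ k)) = z (φ k) := by
    filter_upwards [hev] with k hk
    simp only [hz, dif_pos hk]
  -- show y = P x
  have hdist : Tendsto (fun k => dist (ns (φ k)) (z (φ k))) atTop (𝓝 (dist x y)) :=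
    hnsφ.dist hzφ
  have hdist' : Tendsto (fun k => dist (ns (φ k)) (z (φ k))) atTop (𝓝 (infDist x e)) := by
    have h1 : Tendsto (fun k => infDist (ns (φ k)) e) atTop (𝓝 (infDist x e)) :=
      ((continuous_infDist_pt e).tendsto x).comp hnsφ
    refine h1.congr' ?_
    filter_upwards [hev] with k hk
    simp only [hz, dif_pos hk]
    exact ((hP _ hk).2).symm
  have hxy : dist x y = infDist x e := tendsto_nhds_unique hdist hdist'
  have hyP : y = P x := (htube x hx).unique ⟨hy, hxy⟩ ⟨(hP x hx).1, (hP x hx).2⟩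
  rw [← hyP]
  refine hzφ.congr' ?_
  filter_upwards [hev] with k hk
  simp only [hz, Function.comp_apply, dif_pos hk]

/-- If a compact smoothly embedded curve `e` in `ℝⁿ` has a tubular
neighborhood of radius `δ` (every point within distance `δ` of `e` has a unique nearest
point on `e`), then the intersection of `e` with any open ball of radius `r < δ/2`
is connected (preconnected, since it may be empty). -/
theorem curve_inter_ball_connected {n : ℕ} (δ : ℝ) (hδ : 0 < δ)
    (γ : ℝ → EuclideanSpace ℝ (Fin n)) (hγ : ContDiff ℝ (⊤ : ℕ∞) γ)
    (hinj : Set.InjOn γ (Set.Icc 0 1))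
    (e : Set (EuclideanSpace ℝ (Fin n))) (he : e = γ '' Set.Icc 0 1)
    (htube : ∀ x : EuclideanSpace ℝ (Fin n), Metric.infDist x e < δ →
      ∃! y, y ∈ e ∧ dist x y = Metric.infDist x e)
    (c : EuclideanSpace ℝ (Fin n)) (r : ℝ) (hr : r < δ / 2) :
    IsPreconnected (e ∩ Metric.ball c r) := by
  classical
  have hcomp : IsCompact e := he ▸ (isCompact_Icc.image hγ.continuous)
  rcases (e ∩ Metric.ball c r).eq_empty_or_nonempty with hE | ⟨x0, hx0e, hx0b⟩
  · rw [hE]; exact isPreconnected_empty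
  -- define the projection
  set P : EuclideanSpace ℝ (Fin n) → EuclideanSpace ℝ (Fin n) := fun x => if h : infDist x e < δ then (htube x h).exists.choose else x
    with hPdef
  have hP : ∀ x, infDist x e < δ → P x ∈ e ∧ dist x (P x) = infDist x e := by
    intro x h
    simp only [hPdef, dif_pos h]
    exact (htube x h).exists.choose_spec
  have hPself : ∀ x ∈ e, P x = x := by
    intro x hxe
    have h0 : infDist x e = 0 := infDist_zero_of_mem hxe
    have h : infDist x e < δ := by rw [h0]; exact hδ
    exact ((htube x h).unique ⟨(hP x h).1, (hP x h).2⟩ ⟨hxe, by rw [h0, dist_self]⟩)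
  have hδ2 : δ / 2 < δ := by linarith
  have hrδ : r < δ := lt_trans hr hδ2
  -- infDist c e < δ
  have hcd : infDist c e ≤ dist c x0 := infDist_le_dist_of_mem hx0e
  have hcb : dist c x0 < r := by rw [dist_comm]; exact hx0b
  have hcδ : infDist c e < δ := lt_trans (lt_of_le_of_lt hcd hcb) hrδ
  -- P c is in the set
  have hPc : P c ∈ e ∩ Metric.ball c r := by
    refine ⟨(hP c hcδ).1, ?_⟩
    rw [mem_ball, dist_comm]
    calc dist c (P c) = infDist c e := (hP c hcδ).2
      _ ≤ dist c x0 := hcd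
      _ < r := hcb
  -- path-connectedness
  have hpath : IsPathConnected (e ∩ Metric.ball c r) := by
    refine ⟨P c, hPc, ?_⟩
    intro y hy
    obtain ⟨hye, hyb⟩ := hy
    set d : ℝ := dist y c with hd
    have hdr : d < r := hyb
    -- the segment from y to c
    set g : ℝ → EuclideanSpace ℝ (Fin n) := fun t => y + t • (c - y) with hg
    have hgy : ∀ t : ℝ, dist (g t) y = |t| * d := by
      intro t
      rw [hg, dist_eq_norm]
      simp only [add_sub_cancel_left, norm_smul, Real.norm_eq_abs]
      rw [hd, dist_eq_norm, norm_sub_rev]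
    have hgc : ∀ t : ℝ, dist (g t) c = |1 - t| * d := by
      intro t
      rw [hg, dist_eq_norm]
      have : y + t • (c - y) - c = (1 - t) • (y - c) := by module
      rw [this, norm_smul, Real.norm_eq_abs, hd, dist_eq_norm]
    have hgδ : ∀ t ∈ Set.Icc (0:ℝ) 1, infDist (g t) e < δ := by
      intro t ht
      have : infDist (g t) e ≤ dist (g t) y := infDist_le_dist_of_mem hye
      have habs : |t| * d ≤ d := by
        have : |t| ≤ 1 := abs_le.2 ⟨by linarith [ht.1], ht.2⟩
        nlinarith [dist_nonneg (x := y) (y := c)]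
      calc infDist (g t) e ≤ dist (g t) y := infDist_le_dist_of_mem hye
        _ = |t| * d := hgy t
        _ ≤ d := habs
        _ < δ := lt_trans hdr hrδ
    have hmem : ∀ t ∈ Set.Icc (0:ℝ) 1, P (g t) ∈ e ∩ Metric.ball c r := by
      intro t ht
      refine ⟨(hP _ (hgδ t ht)).1, ?_⟩
      rw [mem_ball]
      have h1 : dist (P (g t)) (g t) = infDist (g t) e := by
        rw [dist_comm]; exact (hP _ (hgδ t ht)).2
      have h2 : infDist (g t) e ≤ |t| * d := (hgy t) ▸ infDist_le_dist_of_mem hye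
      have h3 : dist (P (g t)) c ≤ dist (P (g t)) (g t) + dist (g t) c := dist_triangle _ _ _
      have h4 : |t| = t := abs_of_nonneg ht.1
      have h5 : |1 - t| = 1 - t := abs_of_nonneg (by linarith [ht.2])
      have hd0 : 0 ≤ d := dist_nonneg
      calc dist (P (g t)) c ≤ infDist (g t) e + dist (g t) c := by rw [← h1]; exact h3
        _ ≤ |t| * d + |1 - t| * d := by rw [hgc t]; linarith [h2]
        _ = d := by rw [h4, h5]; ring
        _ < r := hdr
    -- continuity of P on the tube
    have hPcont : ContinuousOn P {x : EuclideanSpace ℝ (Fin n) | infDist x e < δ} := fun x hx =>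
      (proj_continuousAt hcomp htube P hP hx).continuousWithinAt
    have hgcont : Continuous g := by
      exact continuous_const.add ((continuous_id.smul continuous_const))
    -- build the path
    refine JoinedIn.symm ⟨{
        toFun := fun t => P (g t)
        continuous_toFun := ?_
        source' := ?_
        target' := ?_ }, ?_⟩
    · exact hPcont.comp_continuous (hgcont.comp continuous_subtype_val)
        (fun t => hgδ t t.2)
    · show P (g 0) = y
      have : g 0 = y := by simp [hg]
      rw [this]; exact hPself y hye
    · show P (g 1) = P c
      have : g 1 = c := by simp [hg]
      rw [this]
    · intro t
      exact hmem t t.2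
  exact hpath.isConnected.isPreconnected
end

section
/- If a smooth curve e in R^n has a tubular neighborhood of radius δ, then the intersection of e with any sphere of radius less than δ/2 has at most two points (equivalently, at most two connected components). -/
open Metric Set

lemma core_aux {n : ℕ} (δ : ℝ) (γ : ℝ → EuclideanSpace ℝ (Fin n)) (hγc : Continuous γ)
    (hinj : Set.InjOn γ (Set.Icc 0 1)) (e : Set (EuclideanSpace ℝ (Fin n)))
    (he : e = γ '' Set.Icc 0 1)
    (htube : ∀ x : EuclideanSpace ℝ (Fin n), Metric.infDist x e < δ →
      ∃! y, y ∈ e ∧ dist x y = Metric.infDist x e)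
    (c : EuclideanSpace ℝ (Fin n)) (r : ℝ) (hrδ : r < δ) (hr0 : 0 < r)
    (t₀ : ℝ) (ht₀ : t₀ ∈ Set.Icc (0:ℝ) 1) (ht₀n : dist c (γ t₀) = Metric.infDist c e)
    (tp tq : ℝ) (htp : tp ∈ Set.Icc (0:ℝ) 1) (htq : tq ∈ Set.Icc (0:ℝ) 1)
    (hsp : dist (γ tp) c = r) (hsq : dist (γ tq) c = r)
    (hne : tq ≠ tp) (hbet : tq ∈ Set.Icc (min tp t₀) (max tp t₀)) : False := by
  set p := γ tp with hp
  have hpe : p ∈ e := he ▸ ⟨tp, htp, rfl⟩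
  have hcp : ‖c - p‖ = r := by
    rw [← dist_eq_norm, dist_comm]; exact hsp
  set w : ℝ → EuclideanSpace ℝ (Fin n) := fun s => p + (s/r) • (c - p) with hw
  have hwp : ∀ s ∈ Set.Icc (0:ℝ) r, dist (w s) p = s := by
    intro s hs
    have h1 : w s - p = (s/r) • (c - p) := by simp [hw]
    rw [dist_eq_norm, h1, norm_smul, hcp, Real.norm_eq_abs,
      abs_of_nonneg (div_nonneg hs.1 hr0.le)]
    field_simp
  have hwc : ∀ s ∈ Set.Icc (0:ℝ) r, dist (w s) c = r - s := by
    intro s hs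
    have h1 : w s - c = (1 - s/r) • (p - c) := by
      simp only [hw]; module
    have h2 : ‖p - c‖ = r := by rw [← dist_eq_norm]; exact hsp
    rw [dist_eq_norm, h1, norm_smul, h2, Real.norm_eq_abs,
      abs_of_nonneg (by rw [sub_nonneg]; exact div_le_one_of_le₀ hs.2 hr0.le)]
    field_simp
  have hdle : ∀ s ∈ Set.Icc (0:ℝ) r, Metric.infDist (w s) e ≤ s := fun s hs =>
    (Metric.infDist_le_dist_of_mem hpe).trans (hwp s hs).le
  have hex : ∀ s : ℝ, s ∈ Set.Icc (0:ℝ) r → ∃ t, t ∈ Set.Icc (0:ℝ) 1 ∧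
      dist (w s) (γ t) = Metric.infDist (w s) e ∧
      ∀ t', t' ∈ Set.Icc (0:ℝ) 1 → dist (w s) (γ t') = Metric.infDist (w s) e → t' = t := by
    intro s hs
    have hlt : Metric.infDist (w s) e < δ := lt_of_le_of_lt ((hdle s hs).trans hs.2) hrδ
    obtain ⟨y, ⟨hye, hyd⟩, hyu⟩ := htube (w s) hlt
    rw [he] at hye
    obtain ⟨t, ht, rfl⟩ := hye
    refine ⟨t, ht, hyd, fun t' ht' hd' => hinj ht' ht ?_⟩
    exact hyu (γ t') ⟨he ▸ ⟨t', ht', rfl⟩, hd'⟩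
  choose! τ hτ1 hτ2 hτ3 using hex
  -- continuity of τ on [0, r]
  have hwcont : Continuous w := by
    apply continuous_const.add
    exact (continuous_id.div_const r).smul continuous_const
  have hτcont : ContinuousOn τ (Set.Icc 0 r) := by
    rw [Metric.continuousOn_iff]
    intro s₀ hs₀ ε hε
    by_contra hcon
    push_neg at hcon
    have hseq : ∀ m : ℕ, ∃ a, a ∈ Set.Icc (0:ℝ) r ∧ dist a s₀ < 1/(m+1) ∧
        ε ≤ dist (τ a) (τ s₀) := by
      intro m
      obtain ⟨a, ha, h1, h2⟩ := hcon (1/(m+1)) (by positivity)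
      exact ⟨a, ha, h1, h2⟩
    choose u hu1 hu2 hu3 using hseq
    have hu : Filter.Tendsto u Filter.atTop (nhds s₀) := by
      rw [Metric.tendsto_atTop]
      intro ε' hε'
      have h0 : Filter.Tendsto (fun m : ℕ => 1/((m:ℝ)+1)) Filter.atTop (nhds 0) :=
        tendsto_one_div_add_atTop_nhds_zero_nat
      obtain ⟨N, hN⟩ := (Metric.tendsto_atTop.mp h0) ε' hε'
      refine ⟨N, fun m hm => lt_of_lt_of_le (hu2 m) ?_⟩
      have := hN m hm
      rw [Real.dist_eq, sub_zero] at this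
      calc 1/((m:ℝ)+1) ≤ |1/((m:ℝ)+1)| := le_abs_self _
        _ ≤ ε' := this.le
    obtain ⟨L, hL, φ, hφmono, hφ⟩ := isCompact_Icc.tendsto_subseq
      (fun m => hτ1 (u m) (hu1 m))
    have huφ : Filter.Tendsto (fun k => u (φ k)) Filter.atTop (nhds s₀) :=
      hu.comp hφmono.tendsto_atTop
    have hA : Filter.Tendsto (fun k => dist (w (u (φ k))) (γ (τ (u (φ k)))))
        Filter.atTop (nhds (dist (w s₀) (γ L))) :=
      Filter.Tendsto.dist ((hwcont.tendsto s₀).comp huφ) ((hγc.tendsto L).comp hφ)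
    have hB : Filter.Tendsto (fun k => Metric.infDist (w (u (φ k))) e)
        Filter.atTop (nhds (Metric.infDist (w s₀) e)) :=
      ((Metric.continuous_infDist_pt e).tendsto (w s₀)).comp
        ((hwcont.tendsto s₀).comp huφ)
    have heqfun : (fun k => dist (w (u (φ k))) (γ (τ (u (φ k))))) =
        fun k => Metric.infDist (w (u (φ k))) e :=
      funext fun k => hτ2 (u (φ k)) (hu1 (φ k))
    rw [heqfun] at hA
    have hLdist : dist (w s₀) (γ L) = Metric.infDist (w s₀) e :=
      tendsto_nhds_unique hA hB
    have hLτ : L = τ s₀ := hτ3 s₀ hs₀ L hL hLdist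
    obtain ⟨N, hN⟩ := Metric.tendsto_atTop.mp hφ ε hε
    have := hN N le_rfl
    rw [Function.comp_apply, hLτ] at this
    exact absurd this (not_lt.mpr (hu3 (φ N)))
  -- endpoint values
  have hτ0 : τ 0 = tp := by
    have hw0 : w 0 = p := by simp [hw]
    refine (hτ3 0 ⟨le_refl 0, hr0.le⟩ tp htp ?_).symm
    rw [hw0, ← hp, dist_self, Metric.infDist_zero_of_mem hpe]
  have hτr : τ r = t₀ := by
    have hwr : w r = c := by
      simp [hw, div_self hr0.ne']
    refine (hτ3 r ⟨hr0.le, le_refl r⟩ t₀ ht₀ ?_).symm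
    rw [hwr]; exact ht₀n
  -- intermediate value
  have hIVT : tq ∈ τ '' Set.uIcc 0 r := by
    apply intermediate_value_uIcc (by rw [Set.uIcc_of_le hr0.le]; exact hτcont)
    rw [hτ0, hτr]
    rcases le_total tp t₀ with h | h
    · rw [Set.uIcc_of_le h]
      exact ⟨by simpa [min_eq_left h] using hbet.1,
        by simpa [max_eq_right h] using hbet.2⟩
    · rw [Set.uIcc_of_ge h]
      exact ⟨by simpa [min_eq_right h] using hbet.1,
        by simpa [max_eq_left h] using hbet.2⟩
  rw [Set.uIcc_of_le hr0.le] at hIVT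
  obtain ⟨s', hs'mem, hs'⟩ := hIVT
  -- final contradiction
  have hd1 : Metric.infDist (w s') e ≤ s' := hdle s' hs'mem
  have hd2 : dist (w s') (γ tq) = Metric.infDist (w s') e := by
    rw [← hs']; exact hτ2 s' hs'mem
  have hlow : (s' : ℝ) ≤ dist (w s') (γ tq) := by
    have htri : dist c (γ tq) ≤ dist c (w s') + dist (w s') (γ tq) := dist_triangle _ _ _
    rw [dist_comm c (γ tq), hsq, dist_comm c (w s'), hwc s' hs'mem] at htri
    linarith
  have hdeq : Metric.infDist (w s') e = s' := le_antisymm hd1 (hd2 ▸ hlow)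
  have hptp : dist (w s') (γ tp) = Metric.infDist (w s') e := by
    rw [hdeq, ← hp]; exact hwp s' hs'mem
  have : tp = τ s' := hτ3 s' hs'mem tp htp hptp
  rw [hs'] at this
  exact hne this.symm

/-- If a compact smoothly embedded curve `e` in `ℝⁿ` has a tubular
neighborhood of radius `δ`, then its intersection with any sphere of radius `r < δ/2`
has at most two points. -/
theorem curve_inter_sphere_two_points {n : ℕ} (δ : ℝ) (hδ : 0 < δ)
    (γ : ℝ → EuclideanSpace ℝ (Fin n)) (hγ : ContDiff ℝ (⊤ : ℕ∞) γ)
    (hinj : Set.InjOn γ (Set.Icc 0 1))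
    (e : Set (EuclideanSpace ℝ (Fin n))) (he : e = γ '' Set.Icc 0 1)
    (htube : ∀ x : EuclideanSpace ℝ (Fin n), Metric.infDist x e < δ →
      ∃! y, y ∈ e ∧ dist x y = Metric.infDist x e)
    (c : EuclideanSpace ℝ (Fin n)) (r : ℝ) (hr : r < δ / 2) :
    ∃ a b : EuclideanSpace ℝ (Fin n), e ∩ Metric.sphere c r ⊆ {a, b} := by
  by_contra h
  push_neg at h
  obtain ⟨p1, hp1S, -⟩ := Set.not_subset.mp (h c c)
  obtain ⟨p2, hp2S, hp2⟩ := Set.not_subset.mp (h p1 p1)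
  obtain ⟨p3, hp3S, hp3⟩ := Set.not_subset.mp (h p1 p2)
  simp only [Set.mem_insert_iff, Set.mem_singleton_iff, not_or] at hp2 hp3
  replace hp2 : p2 ≠ p1 := hp2.1
  obtain ⟨hp31, hp32⟩ := hp3
  have hs1 : dist p1 c = r := hp1S.2
  have hs2 : dist p2 c = r := hp2S.2
  have hs3 : dist p3 c = r := hp3S.2
  have hr0 : 0 < r := by
    rcases lt_or_eq_of_le (hs1 ▸ dist_nonneg : (0:ℝ) ≤ r) with h' | h'
    · exact h'
    · exact absurd ((dist_eq_zero.mp (hs2.trans h'.symm)).trans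
        (dist_eq_zero.mp (hs1.trans h'.symm)).symm) hp2
  have hrδ : r < δ := hr.trans (by linarith)
  have hcd : Metric.infDist c e < δ := by
    calc Metric.infDist c e ≤ dist c p1 := Metric.infDist_le_dist_of_mem hp1S.1
      _ = r := by rw [dist_comm]; exact hs1
      _ < δ := hrδ
  obtain ⟨y₀, ⟨hy₀e, hy₀d⟩, -⟩ := htube c hcd
  rw [he] at hy₀e
  obtain ⟨t₀, ht₀, rfl⟩ := hy₀e
  have hep : ∀ pi ∈ e ∩ Metric.sphere c r, ∃ u ∈ Set.Icc (0:ℝ) 1, γ u = pi := by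
    intro pi hpi
    have := hpi.1
    rw [he] at this
    exact this
  obtain ⟨u1, hu1, hγ1⟩ := hep p1 hp1S
  obtain ⟨u2, hu2, hγ2⟩ := hep p2 hp2S
  obtain ⟨u3, hu3, hγ3⟩ := hep p3 hp3S
  have hd12 : u1 ≠ u2 := fun h' => hp2 (by rw [← hγ1, ← hγ2, h'])
  have hd13 : u1 ≠ u3 := fun h' => hp31 (by rw [← hγ1, ← hγ3, h'])
  have hd23 : u2 ≠ u3 := fun h' => hp32 (by rw [← hγ2, ← hγ3, h'])
  have hg1 : dist (γ u1) c = r := by rw [hγ1]; exact hs1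
  have hg2 : dist (γ u2) c = r := by rw [hγ2]; exact hs2
  have hg3 : dist (γ u3) c = r := by rw [hγ3]; exact hs3
  have hcore := core_aux δ γ hγ.continuous hinj e he htube c r hrδ hr0 t₀ ht₀ hy₀d
  have pairL : ∀ a b : ℝ, a ∈ Set.Icc (0:ℝ) 1 → b ∈ Set.Icc (0:ℝ) 1 →
      dist (γ a) c = r → dist (γ b) c = r → a ≠ b → a ≤ t₀ → b ≤ t₀ → False := by
    intro a b ha hb hsa hsb hab h1 h2
    rcases hab.lt_or_gt with h' | h'
    · exact hcore a b ha hb hsa hsb h'.ne' ⟨(min_le_left _ _).trans h'.le,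
        h2.trans (le_max_right _ _)⟩
    · exact hcore b a hb ha hsb hsa h'.ne' ⟨(min_le_left _ _).trans h'.le,
        h1.trans (le_max_right _ _)⟩
  have pairG : ∀ a b : ℝ, a ∈ Set.Icc (0:ℝ) 1 → b ∈ Set.Icc (0:ℝ) 1 →
      dist (γ a) c = r → dist (γ b) c = r → a ≠ b → t₀ ≤ a → t₀ ≤ b → False := by
    intro a b ha hb hsa hsb hab h1 h2
    rcases hab.lt_or_gt with h' | h'
    · exact hcore b a hb ha hsb hsa h'.ne ⟨(min_le_right _ _).trans h1,
        h'.le.trans (le_max_left _ _)⟩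
    · exact hcore a b ha hb hsa hsb h'.ne ⟨(min_le_right _ _).trans h2,
        h'.le.trans (le_max_left _ _)⟩
  rcases le_total u1 t₀ with h1 | h1 <;> rcases le_total u2 t₀ with h2 | h2 <;>
    rcases le_total u3 t₀ with h3 | h3
  · exact pairL u1 u2 hu1 hu2 hg1 hg2 hd12 h1 h2
  · exact pairL u1 u2 hu1 hu2 hg1 hg2 hd12 h1 h2
  · exact pairL u1 u3 hu1 hu3 hg1 hg3 hd13 h1 h3
  · exact pairG u2 u3 hu2 hu3 hg2 hg3 hd23 h2 h3
  · exact pairL u2 u3 hu2 hu3 hg2 hg3 hd23 h2 h3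
  · exact pairG u1 u3 hu1 hu3 hg1 hg3 hd13 h1 h3
  · exact pairG u1 u2 hu1 hu2 hg1 hg2 hd12 h1 h2
  · exact pairG u1 u2 hu1 hu2 hg1 hg2 hd12 h1 h2
end

section
/- Let c1, c2 : [0,1] → R^n be two C^2 unit-speed curves with c1(0) = c2(0) = 0 and distinct unit tangent vectors T1 ≠ T2 at 0. Then there exists ξ > 0 such that for all 0 < r < ξ, if e1(r) and e2(r) denote the first intersection points of c1 and c2 with the sphere of radius r, then ‖e1(r) − e2(r)‖ > r². -/
/-!
Up to its first hitting time `t` of the sphere of radius `r`, a unit-speed curve stays in the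
closed ball, so `r ≤ t`; by Taylor it is already outside the sphere at time `2 r`, so `t ≤ 2 r`,
and then `c t = t • c' 0 + O(r²)`. For unit vectors `‖a • u - b • v‖² = (a - b)² + a b ‖u - v‖²`,
so the linearised hit points are at distance at least `r ‖T₁ - T₂‖`, which beats the `O(r²)`
errors and `r²` itself for small `r`.
-/

open Set

section Curves

variable {E : Type*} [NormedAddCommGroup E] {c : ℝ → E}

lemma norm_le_of_norm_deriv_le_one [NormedSpace ℝ E] (hc : Differentiable ℝ c) (h0 : c 0 = 0)
    (hu : ∀ t, ‖deriv c t‖ ≤ 1) {t : ℝ} (ht : 0 ≤ t) : ‖c t‖ ≤ t := by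
  simpa [h0] using norm_image_sub_le_of_norm_deriv_le_segment'
    (fun x _ => (hc x).hasDerivAt.hasDerivWithinAt) (fun x _ => hu x) t (right_mem_Icc.mpr ht)

lemma ContDiff.exists_norm_sub_sub_smul_deriv_le [NormedSpace ℝ E] (hc : ContDiff ℝ 2 c) :
    ∃ L ≥ (0 : ℝ), ∀ t ∈ Icc (0 : ℝ) 1, ‖c t - c 0 - t • deriv c 0‖ ≤ L * t ^ 2 := by
  have hc' : ContDiff ℝ 1 (deriv c) := ContDiff.deriv' (n := 1) hc
  obtain ⟨K, hK⟩ := hc'.contDiffOn.exists_lipschitzOnWith one_ne_zero (convex_Icc (0 : ℝ) 1)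
    isCompact_Icc
  refine ⟨K, K.2, fun t ht => ?_⟩
  have hderiv : ∀ s ∈ Icc 0 t, HasDerivWithinAt (fun s => c s - s • deriv c 0)
      (deriv c s - deriv c 0) (Icc 0 t) s := fun s _ =>
    ((hc.differentiable two_ne_zero s).hasDerivAt.sub
      ((hasDerivAt_id s).smul_const (deriv c 0))).hasDerivWithinAt.congr_deriv (by simp)
  have hbound : ∀ s ∈ Ico 0 t, ‖deriv c s - deriv c 0‖ ≤ K * t := fun s hs =>
    calc ‖deriv c s - deriv c 0‖ ≤ K * ‖s - 0‖ :=
          hK.norm_sub_le ⟨hs.1, hs.2.le.trans ht.2⟩ (left_mem_Icc.mpr zero_le_one)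
      _ ≤ K * t := by
          rw [sub_zero, Real.norm_of_nonneg hs.1]; exact mul_le_mul_of_nonneg_left hs.2.le K.2
  have := norm_image_sub_le_of_norm_deriv_le_segment' hderiv hbound t (right_mem_Icc.mpr ht.1)
  rw [zero_smul, sub_zero, sub_zero, sub_right_comm] at this
  linarith

/-- The first time `t ≥ 0` with `‖c t‖ = r`; `0` if there is none, since `sInf ∅ = 0`. -/
noncomputable def firstHitTime (c : ℝ → E) (r : ℝ) : ℝ :=
  sInf {t | 0 ≤ t ∧ ‖c t‖ = r}

lemma exists_mem_Icc_norm_eq {r s : ℝ} (hc : Continuous c) (h0 : ‖c 0‖ ≤ r) (hs : 0 ≤ s)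
    (hrs : r ≤ ‖c s‖) : ∃ t ∈ Icc 0 s, ‖c t‖ = r :=
  intermediate_value_Icc hs hc.norm.continuousOn ⟨h0, hrs⟩

lemma firstHitTime_mem {r s : ℝ} (hc : Continuous c) (h0 : ‖c 0‖ ≤ r) (hs : 0 ≤ s)
    (hrs : r ≤ ‖c s‖) :
    firstHitTime c r ∈ {t | 0 ≤ t ∧ ‖c t‖ = r} := by
  obtain ⟨t, ht, htr⟩ := exists_mem_Icc_norm_eq hc h0 hs hrs
  exact (isClosed_Ici.inter (isClosed_eq hc.norm continuous_const)).csInf_mem ⟨t, ht.1, htr⟩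
    ⟨0, fun _ h => h.1⟩

lemma firstHitTime_le {r s : ℝ} (hc : Continuous c) (h0 : ‖c 0‖ ≤ r) (hs : 0 ≤ s)
    (hrs : r ≤ ‖c s‖) : firstHitTime c r ≤ s := by
  obtain ⟨t, ht, htr⟩ := exists_mem_Icc_norm_eq hc h0 hs hrs
  exact (csInf_le (s := {t | 0 ≤ t ∧ ‖c t‖ = r}) ⟨0, fun _ h => h.1⟩ ⟨ht.1, htr⟩).trans ht.2

lemma firstHitTime_mem_Icc [NormedSpace ℝ E] {L r : ℝ} (hc : Differentiable ℝ c) (h0 : c 0 = 0)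
    (hu : ∀ t, ‖deriv c t‖ = 1) (hL : ∀ t ∈ Icc (0 : ℝ) 1, ‖c t - t • deriv c 0‖ ≤ L * t ^ 2)
    (hr : 0 ≤ r) (hr₁ : 2 * r ≤ 1) (hLr : 4 * L * r ≤ 1) :
    firstHitTime c r ∈ Icc r (2 * r) := by
  have h0r : ‖c 0‖ ≤ r := by rwa [h0, norm_zero]
  have hfar : r ≤ ‖c (2 * r)‖ := by
    have htaylor := hL (2 * r) ⟨by linarith, hr₁⟩
    have htri := norm_le_insert' ((2 * r) • deriv c 0) (c (2 * r))
    rw [norm_smul, hu, Real.norm_of_nonneg (by linarith), norm_sub_rev] at htri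
    nlinarith
  have hmem := firstHitTime_mem hc.continuous h0r (by linarith) hfar
  refine ⟨?_, firstHitTime_le hc.continuous h0r (by linarith) hfar⟩
  calc r = ‖c (firstHitTime c r)‖ := hmem.2.symm
    _ ≤ firstHitTime c r := norm_le_of_norm_deriv_le_one hc h0 (fun t => (hu t).le) hmem.1

lemma le_firstHitTime_and_norm_sub_smul_le [NormedSpace ℝ E] {L r : ℝ}
    (hc : Differentiable ℝ c) (h0 : c 0 = 0) (hu : ∀ t, ‖deriv c t‖ = 1)
    (hL : ∀ t ∈ Icc (0 : ℝ) 1, ‖c t - t • deriv c 0‖ ≤ L * t ^ 2) (hL0 : 0 ≤ L) (hr : 0 ≤ r)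
    (hLr : (4 * L + 2) * r ≤ 1) :
    r ≤ firstHitTime c r ∧
      ‖c (firstHitTime c r) - firstHitTime c r • deriv c 0‖ ≤ L * (2 * r) ^ 2 := by
  have h2r : 2 * r ≤ 1 := by nlinarith
  obtain ⟨hr_le, hle_2r⟩ := firstHitTime_mem_Icc hc h0 hu hL hr h2r (by nlinarith)
  exact ⟨hr_le, (hL _ ⟨by linarith, by linarith⟩).trans (by gcongr; linarith)⟩

end Curves

lemma norm_smul_sub_smul_sq {F : Type*} [NormedAddCommGroup F] [InnerProductSpace ℝ F]
    {u v : F} (hu : ‖u‖ = 1) (hv : ‖v‖ = 1) (a b : ℝ) :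
    ‖a • u - b • v‖ ^ 2 = (a - b) ^ 2 + a * b * ‖u - v‖ ^ 2 := by
  rw [norm_sub_sq_real, norm_sub_sq_real, norm_smul, norm_smul, real_inner_smul_left,
    real_inner_smul_right, hu, hv, Real.norm_eq_abs, Real.norm_eq_abs, mul_pow, mul_pow, sq_abs,
    sq_abs]
  ring

lemma mul_norm_sub_le_norm_smul_sub_smul {F : Type*} [NormedAddCommGroup F]
    [InnerProductSpace ℝ F] {u v : F} (hu : ‖u‖ = 1) (hv : ‖v‖ = 1) {r a b : ℝ} (hr : 0 ≤ r)
    (ha : r ≤ a) (hb : r ≤ b) : r * ‖u - v‖ ≤ ‖a • u - b • v‖ := by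
  refine le_of_sq_le_sq ?_ (norm_nonneg _)
  rw [norm_smul_sub_smul_sq hu hv, mul_pow]
  have : r ^ 2 ≤ a * b := by nlinarith
  nlinarith [sq_nonneg (a - b), sq_nonneg ‖u - v‖]

/-- Two unit-speed `C²` curves starting at the origin with distinct
unit tangent vectors: there is `ξ > 0` so that for `0 < r < ξ` the first intersection
points with the sphere of radius `r` are at distance greater than `r²`. -/
theorem first_sphere_hits_far {n : ℕ} (c₁ c₂ : ℝ → EuclideanSpace ℝ (Fin n))
    (h1 : ContDiff ℝ 2 c₁) (h2 : ContDiff ℝ 2 c₂)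
    (h10 : c₁ 0 = 0) (h20 : c₂ 0 = 0)
    (hu1 : ∀ t, ‖deriv c₁ t‖ = 1) (hu2 : ∀ t, ‖deriv c₂ t‖ = 1)
    (hT : deriv c₁ 0 ≠ deriv c₂ 0) :
    ∃ ξ > (0:ℝ), ∀ r : ℝ, 0 < r → r < ξ →
      (∃ t ≥ (0:ℝ), ‖c₁ t‖ = r) → (∃ t ≥ (0:ℝ), ‖c₂ t‖ = r) →
      ∀ t₁ t₂ : ℝ,
        t₁ = sInf {t : ℝ | 0 ≤ t ∧ ‖c₁ t‖ = r} →
        t₂ = sInf {t : ℝ | 0 ≤ t ∧ ‖c₂ t‖ = r} →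
        r ^ 2 < ‖c₁ t₁ - c₂ t₂‖ := by
  obtain ⟨L₁, hL₁, hc₁⟩ := h1.exists_norm_sub_sub_smul_deriv_le
  obtain ⟨L₂, hL₂, hc₂⟩ := h2.exists_norm_sub_sub_smul_deriv_le
  simp only [h10, h20, sub_zero] at hc₁ hc₂
  set L := max L₁ L₂
  set d := ‖deriv c₁ 0 - deriv c₂ 0‖
  have hL : 0 ≤ L := hL₁.trans (le_max_left _ _)
  have hd : 0 < d := norm_pos_iff.mpr (sub_ne_zero.mpr hT)
  -- `(4 L + 2) r < 1` puts the hit times in `[r, 2 r]`, `(8 L + 1) r < d` beats the errors.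
  refine ⟨min (1 / (4 * L + 2)) (d / (8 * L + 1)), by positivity, ?_⟩
  rintro r hr hrξ - - t₁ t₂ (rfl : t₁ = firstHitTime c₁ r) (rfl : t₂ = firstHitTime c₂ r)
  rw [lt_min_iff, lt_div_iff₀' (by positivity), lt_div_iff₀' (by positivity)] at hrξ
  obtain ⟨hr₁, hr₂⟩ := hrξ
  have hc₁L : ∀ t ∈ Icc (0 : ℝ) 1, ‖c₁ t - t • deriv c₁ 0‖ ≤ L * t ^ 2 := fun t ht =>
    (hc₁ t ht).trans (by gcongr; exact le_max_left _ _)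
  have hc₂L : ∀ t ∈ Icc (0 : ℝ) 1, ‖c₂ t - t • deriv c₂ 0‖ ≤ L * t ^ 2 := fun t ht =>
    (hc₂ t ht).trans (by gcongr; exact le_max_right _ _)
  obtain ⟨hrt₁, he₁⟩ := le_firstHitTime_and_norm_sub_smul_le (h1.differentiable two_ne_zero)
    h10 hu1 hc₁L hL hr.le hr₁.le
  obtain ⟨hrt₂, he₂⟩ := le_firstHitTime_and_norm_sub_smul_le (h2.differentiable two_ne_zero)
    h20 hu2 hc₂L hL hr.le hr₁.le
  have hlin := mul_norm_sub_le_norm_smul_sub_smul (hu1 0) (hu2 0) hr.le hrt₁ hrt₂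
  have htri := dist_triangle4 (firstHitTime c₁ r • deriv c₁ 0) (c₁ (firstHitTime c₁ r))
    (c₂ (firstHitTime c₂ r)) (firstHitTime c₂ r • deriv c₂ 0)
  rw [dist_eq_norm, dist_eq_norm, dist_eq_norm, dist_eq_norm, norm_sub_rev _ (c₁ _)] at htri
  nlinarith [mul_lt_mul_of_pos_left hr₂ hr]
end

section
/- For r ≤ s, the map p_{s,r} sending a closed subset X of the open ball B_s to X ∩ B_r is continuous with respect to the local Hausdorff distances on B_s and B_r. In particular, if d_L^{(s)}(X_i, X) → 0 then d_L^{(r)}(X_i ∩ B_r, X ∩ B_r) → 0. -/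
open Metric Set Filter

/-- The local Hausdorff distance on subsets of the open ball `B_t ⊂ ℝⁿ`:
`d_L(X,Y) = d_H(X ∪ ∂B_t, Y ∪ ∂B_t)`. -/
noncomputable def localHausdorffDist {n : ℕ} (t : ℝ) (X Y : Set (EuclideanSpace ℝ (Fin n))) : ℝ :=
  Metric.hausdorffDist (X ∪ Metric.sphere (0 : EuclideanSpace ℝ (Fin n)) t)
    (Y ∪ Metric.sphere (0 : EuclideanSpace ℝ (Fin n)) t)

/-! Truncation to `B_r` does not increase the local Hausdorff distance. A point `y` with
`‖y‖ ≥ r`, seen from a point `x` with `‖x‖ ≤ r`, is no closer than the point where the segment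
`[x, y]` crosses `∂B_r`. So replacing the part of a set outside `B_r`, together with `∂B_s`, by
`∂B_r` does not increase distances from points of `B_r`. -/

section NormedSpace

variable {E : Type*} [NormedAddCommGroup E] [NormedSpace ℝ E]

theorem exists_mem_segment_norm_eq {x y : E} {r : ℝ} (hx : ‖x‖ ≤ r) (hy : r ≤ ‖y‖) :
    ∃ z ∈ segment ℝ x y, ‖z‖ = r :=
  (convex_segment x y).isPreconnected.intermediate_value (left_mem_segment ℝ x y)
    (right_mem_segment ℝ x y) continuous_norm.continuousOn ⟨hx, hy⟩

theorem infDist_inter_ball_union_sphere_le [Nontrivial E] {x : E} {r s : ℝ} (B : Set E)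
    (hx : ‖x‖ ≤ r) (hrs : r ≤ s) :
    infDist x (B ∩ ball 0 r ∪ sphere 0 r) ≤ infDist x (B ∪ sphere 0 s) := by
  have hne : (B ∪ sphere (0 : E) s).Nonempty :=
    (NormedSpace.sphere_nonempty.2 ((norm_nonneg x).trans (hx.trans hrs))).mono
      subset_union_right
  refine (le_infDist hne).2 fun y hy => ?_
  by_cases hyr : y ∈ B ∩ ball 0 r
  · exact infDist_le_dist_of_mem (Or.inl hyr)
  have hry : r ≤ ‖y‖ := by
    rcases hy with hyB | hyS
    · simpa [hyB] using hyr
    · rwa [mem_sphere_zero_iff_norm.1 hyS]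
  obtain ⟨z, hz, hzr⟩ := exists_mem_segment_norm_eq hx hry
  calc infDist x (B ∩ ball 0 r ∪ sphere 0 r)
      ≤ dist x z := infDist_le_dist_of_mem (Or.inr (mem_sphere_zero_iff_norm.2 hzr))
    _ ≤ dist x y := by
      rw [← dist_add_dist_of_mem_segment hz]
      exact le_add_of_nonneg_right dist_nonneg

theorem infDist_inter_ball_union_sphere_le_hausdorffDist [Nontrivial E] {r s : ℝ}
    (hrs : r ≤ s) {A B : Set E} (hA : Bornology.IsBounded A) (hB : Bornology.IsBounded B)
    {x : E} (hx : x ∈ A ∩ ball 0 r ∪ sphere 0 r) :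
    infDist x (B ∩ ball 0 r ∪ sphere 0 r) ≤ hausdorffDist (A ∪ sphere 0 s) (B ∪ sphere 0 s) := by
  rcases hx with ⟨hxA, hxr⟩ | hxr
  · have hxr : ‖x‖ ≤ r := (mem_ball_zero_iff.1 hxr).le
    have hsne : (sphere (0 : E) s).Nonempty :=
      NormedSpace.sphere_nonempty.2 ((norm_nonneg x).trans (hxr.trans hrs))
    have hfin : hausdorffEDist (A ∪ sphere 0 s) (B ∪ sphere 0 s) ≠ ⊤ :=
      hausdorffEDist_ne_top_of_nonempty_of_bounded (hsne.mono subset_union_right)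
        (hsne.mono subset_union_right) (hA.union isBounded_sphere) (hB.union isBounded_sphere)
    exact (infDist_inter_ball_union_sphere_le B hxr hrs).trans
      (infDist_le_hausdorffDist_of_mem (Or.inl hxA) hfin)
  · rw [infDist_zero_of_mem (mem_union_right _ hxr)]
    exact hausdorffDist_nonneg

theorem hausdorffDist_inter_ball_union_sphere_le [Nontrivial E] {r s : ℝ} (hrs : r ≤ s)
    {A B : Set E} (hA : Bornology.IsBounded A) (hB : Bornology.IsBounded B) :
    hausdorffDist (A ∩ ball 0 r ∪ sphere 0 r) (B ∩ ball 0 r ∪ sphere 0 r) ≤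
      hausdorffDist (A ∪ sphere 0 s) (B ∪ sphere 0 s) := by
  refine hausdorffDist_le_of_infDist hausdorffDist_nonneg
    (fun x => infDist_inter_ball_union_sphere_le_hausdorffDist hrs hA hB) fun x hx => ?_
  rw [hausdorffDist_comm]
  exact infDist_inter_ball_union_sphere_le_hausdorffDist hrs hB hA hx

end NormedSpace

theorem hausdorffDist_eq_zero_of_subsingleton {α : Type*} [PseudoMetricSpace α] [Subsingleton α]
    (s t : Set α) : hausdorffDist s t = 0 := by
  rcases s.eq_empty_or_nonempty with rfl | hs
  · exact hausdorffDist_empty'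
  rcases t.eq_empty_or_nonempty with rfl | ht
  · exact hausdorffDist_empty
  rw [hs.eq_univ, ht.eq_univ, hausdorffDist_self_zero]

theorem localHausdorffDist_inter_ball_le {n : ℕ} {r s : ℝ} (hrs : r ≤ s)
    {A B : Set (EuclideanSpace ℝ (Fin n))} (hA : Bornology.IsBounded A)
    (hB : Bornology.IsBounded B) :
    localHausdorffDist r (A ∩ ball 0 r) (B ∩ ball 0 r) ≤ localHausdorffDist s A B := by
  rcases subsingleton_or_nontrivial (EuclideanSpace ℝ (Fin n)) with _ | _
  · rw [localHausdorffDist, hausdorffDist_eq_zero_of_subsingleton]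
    exact hausdorffDist_nonneg
  · exact hausdorffDist_inter_ball_union_sphere_le hrs hA hB

theorem truncation_continuous_general {n : ℕ} (r s : ℝ) (hrs : r ≤ s)
    (Xi : ℕ → Set (EuclideanSpace ℝ (Fin n))) (X : Set (EuclideanSpace ℝ (Fin n)))
    (hXisub : ∀ i, Xi i ⊆ Metric.ball 0 s) (hXsub : X ⊆ Metric.ball 0 s)
    (hconv : Tendsto (fun i => localHausdorffDist s (Xi i) X) atTop (nhds 0)) :
    Tendsto (fun i => localHausdorffDist r
      (Xi i ∩ Metric.ball (0 : EuclideanSpace ℝ (Fin n)) r)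
      (X ∩ Metric.ball (0 : EuclideanSpace ℝ (Fin n)) r)) atTop (nhds 0) :=
  squeeze_zero (fun _ => hausdorffDist_nonneg)
    (fun i => localHausdorffDist_inter_ball_le hrs (isBounded_ball.subset (hXisub i))
      (isBounded_ball.subset hXsub))
    hconv

/-- For `r ≤ s`, intersecting with `B_r` is continuous from
`(closed subsets of B_s, d_L^{(s)})` to `(subsets of B_r, d_L^{(r)})`: if
`d_L^{(s)}(X_i, X) → 0` then `d_L^{(r)}(X_i ∩ B_r, X ∩ B_r) → 0`. -/
theorem truncation_continuous {n : ℕ} (r s : ℝ) (hr : 0 < r) (hrs : r ≤ s)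
    (Xi : ℕ → Set (EuclideanSpace ℝ (Fin n))) (X : Set (EuclideanSpace ℝ (Fin n)))
    (hXisub : ∀ i, Xi i ⊆ Metric.ball 0 s) (hXsub : X ⊆ Metric.ball 0 s)
    (hXic : ∀ i, ∀ p ∈ closure (Xi i), p ∈ Metric.ball (0 : EuclideanSpace ℝ (Fin n)) s → p ∈ Xi i)
    (hXc : ∀ p ∈ closure X, p ∈ Metric.ball (0 : EuclideanSpace ℝ (Fin n)) s → p ∈ X)
    (hconv : Tendsto (fun i => localHausdorffDist s (Xi i) X) atTop (nhds 0)) :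
    Tendsto (fun i => localHausdorffDist r
      (Xi i ∩ Metric.ball (0 : EuclideanSpace ℝ (Fin n)) r)
      (X ∩ Metric.ball (0 : EuclideanSpace ℝ (Fin n)) r)) atTop (nhds 0) :=
  truncation_continuous_general r s hrs Xi X hXisub hXsub hconv
end

section
/- Let X be a metrizable space, s : X̂ → X a continuous bijection from a finer topology, and {X_M}_{M∈ℕ} an increasing family of subsets of X, each closed, on which s is a homeomorphism. Let μ_i → μ weakly on X, and suppose the sequence is uniformly separating: for every ε > 0 there is M with μ_i(X_M) > 1 − ε for all i. Then the pushforwards s^{-1}_*μ_i converge weakly to s^{-1}_*μ on X̂. -/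
open Set Topology MeasureTheory Filter

/-!
Put `g = f ∘ s⁻¹`, a bounded measurable function on `X`. Since `s` is a homeomorphism over the
closed set `X_M`, `g` is continuous on `X_M`, so by Tietze it agrees there with a continuous `G`
satisfying the same bound `C`. Then `|∫ g dν - ∫ G dν| ≤ 2C ν(X_Mᶜ)` for every probability
measure `ν`. Uniform separation makes this small for all `μ_i` at once, and by the portmanteau
theorem also for `μ`; since `∫ G dμ_i → ∫ G dμ`, an `ε/3`-argument concludes.
-/

theorem tendsto_of_forall_approx {ι α : Type*} [PseudoMetricSpace α] {l : Filter ι}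
    {u : ι → α} {a : α}
    (h : ∀ ε > 0, ∃ (v : ι → α) (b : α), Tendsto v l (𝓝 b) ∧
      (∀ᶠ i in l, dist (u i) (v i) ≤ ε) ∧ dist a b ≤ ε) :
    Tendsto u l (𝓝 a) := by
  refine Metric.tendsto_nhds.2 fun ε hε => ?_
  obtain ⟨v, b, hv, huv, hab⟩ := h (ε / 4) (by positivity)
  filter_upwards [huv, Metric.tendsto_nhds.1 hv (ε / 4) (by positivity)] with i hi hvi
  calc dist (u i) a ≤ dist (u i) (v i) + dist (v i) b + dist b a := dist_triangle4 _ _ _ _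
    _ < ε := by rw [dist_comm b]; linarith

theorem continuousOn_invFun_of_isInducing_domRestrict {α β : Type*} [TopologicalSpace α]
    [TopologicalSpace β] [Nonempty α] {s : α → β} {A : Set β} (hA : A ⊆ range s)
    (hs : IsInducing ((s ⁻¹' A).domRestrict s)) :
    ContinuousOn (Function.invFun s) A := by
  have hmaps : MapsTo (Function.invFun s) A (s ⁻¹' A) := fun y hy => by
    rw [mem_preimage, Function.invFun_eq (hA hy)]
    exact hy
  have hcont : Continuous hmaps.restrict := hs.continuous_iff.2 <| by
    convert continuous_subtype_val using 1
    ext y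
    exact Function.invFun_eq (hA y.2)
  exact continuousOn_iff_continuous_domRestrict.2 (continuous_subtype_val.comp hcont)

theorem exists_continuous_abs_le_eqOn_of_continuousOn {X : Type*} [TopologicalSpace X]
    [NormalSpace X] {F : Set X} (hF : IsClosed F) {g : X → ℝ} (hg : ContinuousOn g F)
    {C : ℝ} (hC : 0 ≤ C) (hgC : ∀ x ∈ F, |g x| ≤ C) :
    ∃ G : X → ℝ, Continuous G ∧ (∀ x, |G x| ≤ C) ∧ EqOn G g F := by
  obtain ⟨G, hGC, hGg⟩ := ContinuousMap.exists_restrict_eq_forall_mem_of_closed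
    ⟨F.domRestrict g, hg.domRestrict⟩ (t := Icc (-C) C) (fun x => abs_le.1 (hgC x x.2))
    ⟨0, by simp [hC]⟩ hF
  exact ⟨G, G.continuous, fun x => abs_le.2 (hGC x), fun x hx => DFunLike.congr_fun hGg ⟨x, hx⟩⟩

theorem norm_integral_sub_le_of_eqOn {α E : Type*} [MeasurableSpace α] [NormedAddCommGroup E]
    [NormedSpace ℝ E] {ν : Measure α} [IsFiniteMeasure ν] {F : Set α} (hF : MeasurableSet F)
    {g G : α → E} (hg : AEStronglyMeasurable g ν) (hG : AEStronglyMeasurable G ν)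
    (hgG : EqOn g G F) {C : ℝ} (hgC : ∀ x, ‖g x‖ ≤ C) (hGC : ∀ x, ‖G x‖ ≤ C) :
    ‖∫ x, g x ∂ν - ∫ x, G x ∂ν‖ ≤ 2 * C * ν.real Fᶜ := by
  have hg' : Integrable g ν := .of_bound hg C (ae_of_all _ hgC)
  have hG' : Integrable G ν := .of_bound hG C (ae_of_all _ hGC)
  rw [← integral_sub hg' hG', ← integral_add_compl (f := fun x => g x - G x) hF (hg'.sub hG'),
    setIntegral_eq_zero_of_forall_eq_zero fun x hx => sub_eq_zero.2 (hgG hx), zero_add]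
  refine norm_setIntegral_le_of_norm_le_const (measure_lt_top _ _) fun x _ => ?_
  exact (norm_sub_le _ _).trans <| (add_le_add (hgC x) (hGC x)).trans_eq (two_mul C).symm

theorem ProbabilityMeasure.measureReal_le_of_tendsto {Ω ι : Type*} {L : Filter ι} [L.NeBot]
    [MeasurableSpace Ω] [TopologicalSpace Ω] [OpensMeasurableSpace Ω] [HasOuterApproxClosed Ω]
    {μ : ProbabilityMeasure Ω} {μs : ι → ProbabilityMeasure Ω} (hμs : Tendsto μs L (𝓝 μ))
    {U : Set Ω} (hU : IsOpen U) {a : ℝ} (ha : ∀ᶠ i in L, (μs i : Measure Ω).real U ≤ a) :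
    (μ : Measure Ω).real U ≤ a := by
  have ha0 : 0 ≤ a := by
    obtain ⟨i, hi⟩ := ha.exists
    exact measureReal_nonneg.trans hi
  have hle : ∀ᶠ i in L, (μs i : Measure Ω) U ≤ ENNReal.ofReal a :=
    ha.mono fun i hi => (ENNReal.le_ofReal_iff_toReal_le (measure_ne_top _ _) ha0).2 hi
  exact ENNReal.toReal_le_of_le_ofReal ha0 <|
    (ProbabilityMeasure.le_liminf_measure_open_of_tendsto hμs hU).trans
      (liminf_le_of_frequently_le' hle.frequently)

theorem uniformly_separating_weak_convergence_general {Xh X : Type*} [Nonempty Xh]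
    [TopologicalSpace Xh] [TopologicalSpace X] [TopologicalSpace.MetrizableSpace X]
    [MeasurableSpace Xh] [BorelSpace Xh] [MeasurableSpace X] [BorelSpace X]
    (s : Xh → X) (hbij : Function.Bijective s)
    (hinv : Measurable (Function.invFun s))
    (XM : ℕ → Set X) (hclosed : ∀ M, IsClosed (XM M))
    (hemb : ∀ M, Topology.IsEmbedding ((s ⁻¹' XM M).restrict s))
    (μs : ℕ → Measure X) (μ : Measure X)
    [∀ i, IsProbabilityMeasure (μs i)] [IsProbabilityMeasure μ]
    (hweak : ∀ f : X → ℝ, Continuous f → (∃ C, ∀ x, |f x| ≤ C) →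
      Tendsto (fun i => ∫ x, f x ∂(μs i)) atTop (nhds (∫ x, f x ∂μ)))
    (hsep : ∀ ε > (0:ℝ), ∃ M, ∀ i, 1 - ε < ((μs i) (XM M)).toReal) :
    ∀ f : Xh → ℝ, Continuous f → (∃ C, ∀ x, |f x| ≤ C) →
      Tendsto (fun i => ∫ y, f y ∂((μs i).map (Function.invFun s))) atTop
        (nhds (∫ y, f y ∂(μ.map (Function.invFun s)))) := by
  rintro f hf ⟨C, hC⟩
  have hC0 : 0 ≤ C := (abs_nonneg _).trans (hC (Classical.arbitrary Xh))
  have hμs : Tendsto (β := ProbabilityMeasure X) (fun i => ⟨μs i, inferInstance⟩) atTop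
      (𝓝 ⟨μ, inferInstance⟩) :=
    ProbabilityMeasure.tendsto_iff_forall_integral_tendsto.2 fun φ =>
      hweak φ φ.continuous ⟨‖φ‖, φ.norm_coe_le_norm⟩
  simp only [integral_map hinv.aemeasurable hf.aestronglyMeasurable]
  refine tendsto_of_forall_approx fun ε hε => ?_
  set δ := ε / (2 * C + 1)
  have hδ : 2 * C * δ ≤ ε := by
    rw [mul_div_assoc', div_le_iff₀ (by positivity)]
    linarith
  obtain ⟨M, hM⟩ := hsep δ (by positivity)
  have hMc : ∀ i, (μs i).real (XM M)ᶜ ≤ δ := fun i => by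
    rw [probReal_compl_eq_one_sub (hclosed M).measurableSet, measureReal_def]
    linarith [hM i]
  have hMμ : μ.real (XM M)ᶜ ≤ δ :=
    ProbabilityMeasure.measureReal_le_of_tendsto hμs (hclosed M).isOpen_compl (.of_forall hMc)
  obtain ⟨G, hGc, hGC, hGg⟩ := exists_continuous_abs_le_eqOn_of_continuousOn (hclosed M)
    (hf.comp_continuousOn (continuousOn_invFun_of_isInducing_domRestrict
      (fun y _ => hbij.2 y) (hemb M).isInducing)) hC0 fun x _ => hC _
  have hclose : ∀ (ν : Measure X) [IsProbabilityMeasure ν], ν.real (XM M)ᶜ ≤ δ →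
      dist (∫ x, f (Function.invFun s x) ∂ν) (∫ x, G x ∂ν) ≤ ε := fun ν _ hν =>
    calc dist (∫ x, f (Function.invFun s x) ∂ν) (∫ x, G x ∂ν)
        ≤ 2 * C * ν.real (XM M)ᶜ :=
          (dist_eq_norm _ _).trans_le <| norm_integral_sub_le_of_eqOn (hclosed M).measurableSet
            (hf.measurable.comp hinv).aestronglyMeasurable hGc.aestronglyMeasurable hGg.symm
            (fun x => hC _) hGC
      _ ≤ 2 * C * δ := by gcongr
      _ ≤ ε := hδ
  exact ⟨_, _, hweak G hGc ⟨C, hGC⟩, .of_forall fun i => hclose _ (hMc i), hclose μ hMμ⟩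

/-- Let `s : X̂ → X` be a continuous bijection from a finer topology
on a metrizable space, with an increasing family of closed sets `X_M ⊆ X` on which `s`
is a homeomorphism. If probability measures `μ_i → μ` weakly on `X` and the sequence is
uniformly separating (for every `ε > 0` there is `M` with `μ_i(X_M) > 1 − ε` for all
`i`), then the pushforwards `s⁻¹_* μ_i` converge weakly to `s⁻¹_* μ` on `X̂`. -/
theorem uniformly_separating_weak_convergence {Xh X : Type*} [Nonempty Xh]
    [TopologicalSpace Xh] [TopologicalSpace X] [TopologicalSpace.MetrizableSpace X]
    [MeasurableSpace Xh] [BorelSpace Xh] [MeasurableSpace X] [BorelSpace X]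
    (s : Xh → X) (hcont : Continuous s) (hbij : Function.Bijective s)
    (hinv : Measurable (Function.invFun s))
    (XM : ℕ → Set X) (hclosed : ∀ M, IsClosed (XM M)) (hmono : Monotone XM)
    (hemb : ∀ M, Topology.IsEmbedding ((s ⁻¹' XM M).restrict s))
    (μs : ℕ → Measure X) (μ : Measure X)
    [∀ i, IsProbabilityMeasure (μs i)] [IsProbabilityMeasure μ]
    (hweak : ∀ f : X → ℝ, Continuous f → (∃ C, ∀ x, |f x| ≤ C) →
      Tendsto (fun i => ∫ x, f x ∂(μs i)) atTop (nhds (∫ x, f x ∂μ)))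
    (hsep : ∀ ε > (0:ℝ), ∃ M, ∀ i, 1 - ε < ((μs i) (XM M)).toReal) :
    ∀ f : Xh → ℝ, Continuous f → (∃ C, ∀ x, |f x| ≤ C) →
      Tendsto (fun i => ∫ y, f y ∂((μs i).map (Function.invFun s))) atTop
        (nhds (∫ y, f y ∂(μ.map (Function.invFun s)))) :=
  uniformly_separating_weak_convergence_general s hbij hinv XM hclosed hemb μs μ hweak hsep
end
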